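/- arXiv:gr-qc/0606133 — 4 statements merged into one kernel-verified Lean document; each statement's English description precedes it below -/
import Mathlib

section
/- Let p >= 2 and suppose real numbers c > 0 and t >= 1 are given. If complex numbers u_k (k = 0, ..., p) satisfy u_0 = 0, |u_1| = |u̇_0|, and |u_k| <= c * t^{k-2} * k! / (k+1)^2 for 2 <= k <= p, and complex numbers F_k satisfy |F_k| <= c * t^k * k! / (k+1)^2 for 0 <= k <= p, then the p-th Leibniz convolution satisfies |∑_{j=0}^{p} C(p,j) u_j F_{p-j}| <= |u̇_0| * c * t^{p-1} * p! / p^2 + c^2 * C * t^{p-2} * p! / (p+1)^2, where C is the convolution constant satisfying ∑_{k=0}^n 1/((k+1)^2 (n-k+1)^2) <= C/(n+1)^2. -/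
theorem stmt_6 (p : ℕ) (hp : 2 ≤ p) (c t Cc : ℝ) (hc : 0 < c) (ht : 1 ≤ t)
    (hCc : ∀ N : ℕ, ∑ k ∈ Finset.range (N + 1),
        (1 : ℝ) / (((k : ℝ) + 1) ^ 2 * ((N : ℝ) - (k : ℝ) + 1) ^ 2) ≤ Cc / ((N : ℝ) + 1) ^ 2)
    (u F : ℕ → ℂ) (udot0 : ℂ)
    (hu0 : u 0 = 0) (hu1 : ‖u 1‖ = ‖udot0‖)
    (hu : ∀ k, 2 ≤ k → k ≤ p →
      ‖u k‖ ≤ c * t ^ (k - 2) * (Nat.factorial k : ℝ) / ((k : ℝ) + 1) ^ 2)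
    (hF : ∀ k, k ≤ p → ‖F k‖ ≤ c * t ^ k * (Nat.factorial k : ℝ) / ((k : ℝ) + 1) ^ 2) :
    ‖∑ j ∈ Finset.range (p + 1), (p.choose j : ℂ) * u j * F (p - j)‖
      ≤ ‖udot0‖ * c * t ^ (p - 1) * (Nat.factorial p : ℝ) / (p : ℝ) ^ 2
        + c ^ 2 * Cc * t ^ (p - 2) * (Nat.factorial p : ℝ) / ((p : ℝ) + 1) ^ 2 := by
  have ht0 : (0:ℝ) < t := lt_of_lt_of_le one_pos ht
  have hppos : (0:ℝ) < (p:ℝ) := by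
    have : 0 < p := by omega
    exact_mod_cast this
  set f : ℕ → ℂ := fun j => (p.choose j : ℂ) * u j * F (p - j) with hfdef
  have hsplit : ∑ j ∈ Finset.range (p+1), f j
      = f 1 + ∑ j ∈ Finset.Ico 2 (p+1), f j := by
    rw [Finset.range_eq_Ico,
      ← Finset.sum_Ico_consecutive f (Nat.zero_le 2) (by omega : 2 ≤ p+1)]
    have h02 : ∑ j ∈ Finset.Ico 0 2, f j = f 0 + f 1 := by
      rw [← Finset.range_eq_Ico]
      simp [Finset.sum_range_succ]
    rw [h02]
    simp [hfdef, hu0]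
  rw [hsplit]
  -- bound for the j = 1 term
  have h1 : ‖f 1‖ ≤ ‖udot0‖ * c * t ^ (p - 1) * (Nat.factorial p : ℝ) / (p : ℝ) ^ 2 := by
    have hcast : ((p-1:ℕ):ℝ) = (p:ℝ) - 1 := by
      have : (1:ℕ) ≤ p := by omega
      push_cast [Nat.cast_sub this]
      ring
    have hF1 : ‖F (p-1)‖ ≤ c * t ^ (p-1) * ((p-1).factorial : ℝ) / (p:ℝ) ^ 2 := by
      have := hF (p-1) (by omega)
      rwa [hcast, sub_add_cancel] at this
    have hnorm : ‖f 1‖ = (p:ℝ) * ‖udot0‖ * ‖F (p-1)‖ := by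
      simp [hfdef, norm_mul, hu1, mul_assoc]
    rw [hnorm]
    have hfac : (p:ℝ) * ((p-1).factorial : ℝ) = (p.factorial : ℝ) := by
      rw_mod_cast [Nat.mul_factorial_pred (by omega : p ≠ 0)]
    calc (p:ℝ) * ‖udot0‖ * ‖F (p-1)‖
        ≤ (p:ℝ) * ‖udot0‖ * (c * t ^ (p-1) * ((p-1).factorial : ℝ) / (p:ℝ) ^ 2) := by
          gcongr
      _ = ‖udot0‖ * c * t ^ (p - 1) * ((p:ℝ) * ((p-1).factorial : ℝ)) / (p : ℝ) ^ 2 := by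
          ring
      _ = ‖udot0‖ * c * t ^ (p - 1) * (Nat.factorial p : ℝ) / (p : ℝ) ^ 2 := by
          rw [hfac]
  -- bound for the tail
  have h2 : ‖∑ j ∈ Finset.Ico 2 (p+1), f j‖
      ≤ c ^ 2 * Cc * t ^ (p - 2) * (Nat.factorial p : ℝ) / ((p : ℝ) + 1) ^ 2 := by
    have hterm : ∀ j ∈ Finset.Ico 2 (p+1), ‖f j‖
        ≤ c ^ 2 * t ^ (p-2) * (p.factorial : ℝ) *
          ((1:ℝ) / (((j:ℝ) + 1) ^ 2 * ((p:ℝ) - (j:ℝ) + 1) ^ 2)) := by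
      intro j hj
      simp only [Finset.mem_Ico] at hj
      obtain ⟨hj2, hjp⟩ := hj
      have hjp' : j ≤ p := by omega
      have hcast : ((p-j:ℕ):ℝ) = (p:ℝ) - (j:ℝ) := by
        push_cast [Nat.cast_sub hjp']
        ring
      have hFj : ‖F (p-j)‖ ≤ c * t ^ (p-j) * ((p-j).factorial : ℝ) / ((p:ℝ) - (j:ℝ) + 1) ^ 2 := by
        have := hF (p-j) (by omega)
        rwa [hcast] at this
      have huj := hu j hj2 hjp'
      have hnorm : ‖f j‖ = (p.choose j : ℝ) * ‖u j‖ * ‖F (p-j)‖ := by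
        simp [hfdef, norm_mul]
      rw [hnorm]
      have hd1 : (0:ℝ) < ((j:ℝ) + 1) ^ 2 := by positivity
      have hd2 : (0:ℝ) < ((p:ℝ) - (j:ℝ) + 1) ^ 2 := by
        have : (j:ℝ) ≤ (p:ℝ) := by exact_mod_cast hjp'
        nlinarith
      calc (p.choose j : ℝ) * ‖u j‖ * ‖F (p-j)‖
          ≤ (p.choose j : ℝ) * (c * t ^ (j - 2) * (j.factorial : ℝ) / ((j : ℝ) + 1) ^ 2)
            * (c * t ^ (p-j) * ((p-j).factorial : ℝ) / ((p:ℝ) - (j:ℝ) + 1) ^ 2) := by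
            gcongr
        _ = c ^ 2 * (t ^ (j-2) * t ^ (p-j)) *
              ((p.choose j : ℝ) * (j.factorial : ℝ) * ((p-j).factorial : ℝ)) *
              ((1:ℝ) / (((j:ℝ) + 1) ^ 2 * ((p:ℝ) - (j:ℝ) + 1) ^ 2)) := by
            field_simp
        _ = c ^ 2 * t ^ (p-2) * (p.factorial : ℝ) *
              ((1:ℝ) / (((j:ℝ) + 1) ^ 2 * ((p:ℝ) - (j:ℝ) + 1) ^ 2)) := by
            rw [← pow_add]
            have he : j - 2 + (p - j) = p - 2 := by omega
            rw [he]
            congr 1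
            rw_mod_cast [Nat.choose_mul_factorial_mul_factorial hjp']
    calc ‖∑ j ∈ Finset.Ico 2 (p+1), f j‖
        ≤ ∑ j ∈ Finset.Ico 2 (p+1), ‖f j‖ := norm_sum_le _ _
      _ ≤ ∑ j ∈ Finset.Ico 2 (p+1),
            c ^ 2 * t ^ (p-2) * (p.factorial : ℝ) *
              ((1:ℝ) / (((j:ℝ) + 1) ^ 2 * ((p:ℝ) - (j:ℝ) + 1) ^ 2)) :=
          Finset.sum_le_sum hterm
      _ ≤ ∑ j ∈ Finset.range (p+1),
            c ^ 2 * t ^ (p-2) * (p.factorial : ℝ) *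
              ((1:ℝ) / (((j:ℝ) + 1) ^ 2 * ((p:ℝ) - (j:ℝ) + 1) ^ 2)) := by
          apply Finset.sum_le_sum_of_subset_of_nonneg
          · intro x hx
            simp only [Finset.mem_Ico] at hx
            simp only [Finset.mem_range]
            omega
          · intro i hi _
            have hip : (i:ℝ) ≤ (p:ℝ) := by
              simp only [Finset.mem_range] at hi
              exact_mod_cast Nat.lt_succ_iff.mp hi
            have h2 : (0:ℝ) < ((p:ℝ) - (i:ℝ) + 1) ^ 2 := by nlinarith
            positivity
      _ = c ^ 2 * t ^ (p-2) * (p.factorial : ℝ) *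
            ∑ j ∈ Finset.range (p+1),
              ((1:ℝ) / (((j:ℝ) + 1) ^ 2 * ((p:ℝ) - (j:ℝ) + 1) ^ 2)) := by
          rw [Finset.mul_sum]
      _ ≤ c ^ 2 * t ^ (p-2) * (p.factorial : ℝ) * (Cc / ((p:ℝ) + 1) ^ 2) := by
          apply mul_le_mul_of_nonneg_left (hCc p)
          positivity
      _ = c ^ 2 * Cc * t ^ (p - 2) * (Nat.factorial p : ℝ) / ((p : ℝ) + 1) ^ 2 := by
          ring
  calc ‖f 1 + ∑ j ∈ Finset.Ico 2 (p+1), f j‖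
      ≤ ‖f 1‖ + ‖∑ j ∈ Finset.Ico 2 (p+1), f j‖ := norm_add_le _ _
    _ ≤ _ := add_le_add h1 h2
end

section
/- Let m, n, p be non-negative integers, r, ρ > 0, c_1, c_2 > 0, and q_1, q_2 integers. Suppose complex numbers a_{j,k,l} and b_{j,k,l} (for 0 <= j <= m, 0 <= k <= n, 0 <= l <= p) satisfy |a_{j,k,l}| <= c_1 * r^{j+l+q_1} * (j+l)! * ρ^k * k! / ((j+1)^2 (k+1)^2 (l+1)^2) and similarly for b with constants c_2, q_2. Then the triple Leibniz convolution ∑_{j,k,l} C(m,j) C(n,k) C(p,l) a_{j,k,l} b_{m-j,n-k,p-l} has modulus at most C^3 * c_1 * c_2 * r^{m+p+q_1+q_2} * (m+p)! * ρ^n * n! / ((m+1)^2 (n+1)^2 (p+1)^2), where C is the convolution constant from the estimate ∑_{k=0}^N 1/((k+1)^2 (N-k+1)^2) <= C/(N+1)^2. -/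
lemma choose_mul_choose_le' (m p j l : ℕ) :
    m.choose j * p.choose l ≤ (m + p).choose (j + l) := by
  rw [Nat.add_choose_eq]
  exact Finset.single_le_sum (f := fun ij : ℕ × ℕ => m.choose ij.1 * p.choose ij.2)
    (fun i _ => Nat.zero_le _) (a := ((j,l) : ℕ × ℕ)) (Finset.HasAntidiagonal.mem_antidiagonal.2 rfl)

lemma key_fact (m p j l : ℕ) (hj : j ≤ m) (hl : l ≤ p) :
    ((m.choose j : ℝ) * p.choose l) * (Nat.factorial (j + l))
      * (Nat.factorial ((m - j) + (p - l))) ≤ Nat.factorial (m + p) := by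
  have h1 : (m - j) + (p - l) = (m + p) - (j + l) := by omega
  have h2 : j + l ≤ m + p := by omega
  have := Nat.choose_mul_factorial_mul_factorial h2
  have h3 : m.choose j * p.choose l * Nat.factorial (j+l) * Nat.factorial ((m-j)+(p-l))
      ≤ Nat.factorial (m + p) := by
    rw [h1, ← this]
    exact Nat.mul_le_mul_right _ (Nat.mul_le_mul_right _ (choose_mul_choose_le' m p j l))
  exact_mod_cast h3

set_option maxHeartbeats 1600000 in
lemma term_bound (m n p j k l : ℕ) (r ρ c₁ c₂ : ℝ) (q₁ q₂ : ℤ)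
    (hr : 0 < r) (hρ : 0 < ρ) (hc₁ : 0 ≤ c₁) (hc₂ : 0 ≤ c₂)
    (hj : j ≤ m) (hk : k ≤ n) (hl : l ≤ p) :
    (m.choose j : ℝ) * n.choose k * p.choose l *
      (c₁ * r ^ ((j : ℤ) + l + q₁) * (Nat.factorial (j + l) : ℝ) * ρ ^ k
        * (Nat.factorial k : ℝ)
        / (((j : ℝ) + 1) ^ 2 * ((k : ℝ) + 1) ^ 2 * ((l : ℝ) + 1) ^ 2)) *
      (c₂ * r ^ (((m - j : ℕ) : ℤ) + ((p - l : ℕ) : ℤ) + q₂)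
        * (Nat.factorial ((m - j) + (p - l)) : ℝ) * ρ ^ (n - k)
        * (Nat.factorial (n - k) : ℝ)
        / ((((m - j : ℕ) : ℝ) + 1) ^ 2 * (((n - k : ℕ) : ℝ) + 1) ^ 2
            * (((p - l : ℕ) : ℝ) + 1) ^ 2))
    ≤ c₁ * c₂ * r ^ ((m : ℤ) + p + q₁ + q₂) * (Nat.factorial (m + p) : ℝ) * ρ ^ n
        * (Nat.factorial n : ℝ) *
      (1 / (((j : ℝ) + 1) ^ 2 * ((m : ℝ) - (j : ℝ) + 1) ^ 2)
        * (1 / (((k : ℝ) + 1) ^ 2 * ((n : ℝ) - (k : ℝ) + 1) ^ 2))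
        * (1 / (((l : ℝ) + 1) ^ 2 * ((p : ℝ) - (l : ℝ) + 1) ^ 2))) := by
  have e1 : ((m - j : ℕ) : ℝ) = (m : ℝ) - j := by
    rw [Nat.cast_sub hj]
  have e2 : ((n - k : ℕ) : ℝ) = (n : ℝ) - k := by rw [Nat.cast_sub hk]
  have e3 : ((p - l : ℕ) : ℝ) = (p : ℝ) - l := by rw [Nat.cast_sub hl]
  have hzr : r ^ ((j : ℤ) + l + q₁) * r ^ (((m - j : ℕ) : ℤ) + ((p - l : ℕ) : ℤ) + q₂)
      = r ^ ((m : ℤ) + p + q₁ + q₂) := by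
    rw [← zpow_add₀ hr.ne']
    congr 1
    push_cast [Nat.cast_sub hj, Nat.cast_sub hl]
    ring
  have hpn : ρ ^ k * ρ ^ (n - k) = ρ ^ n := by
    rw [← pow_add]; congr 1; omega
  have hnf : (n.choose k : ℝ) * (Nat.factorial k) * (Nat.factorial (n - k))
      = (Nat.factorial n : ℝ) := by
    exact_mod_cast congrArg (Nat.cast (R := ℝ)) (Nat.choose_mul_factorial_mul_factorial hk)
  have hF : (0:ℝ) ≤ 1 / (((j : ℝ) + 1) ^ 2 * ((m : ℝ) - (j : ℝ) + 1) ^ 2)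
        * (1 / (((k : ℝ) + 1) ^ 2 * ((n : ℝ) - (k : ℝ) + 1) ^ 2))
        * (1 / (((l : ℝ) + 1) ^ 2 * ((p : ℝ) - (l : ℝ) + 1) ^ 2)) := by positivity
  calc (m.choose j : ℝ) * n.choose k * p.choose l *
      (c₁ * r ^ ((j : ℤ) + l + q₁) * (Nat.factorial (j + l) : ℝ) * ρ ^ k
        * (Nat.factorial k : ℝ)
        / (((j : ℝ) + 1) ^ 2 * ((k : ℝ) + 1) ^ 2 * ((l : ℝ) + 1) ^ 2)) *
      (c₂ * r ^ (((m - j : ℕ) : ℤ) + ((p - l : ℕ) : ℤ) + q₂)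
        * (Nat.factorial ((m - j) + (p - l)) : ℝ) * ρ ^ (n - k)
        * (Nat.factorial (n - k) : ℝ)
        / ((((m - j : ℕ) : ℝ) + 1) ^ 2 * (((n - k : ℕ) : ℝ) + 1) ^ 2
            * (((p - l : ℕ) : ℝ) + 1) ^ 2))
      = ((m.choose j : ℝ) * p.choose l * (Nat.factorial (j + l))
            * (Nat.factorial ((m - j) + (p - l))))
        * (((n.choose k : ℝ) * (Nat.factorial k) * (Nat.factorial (n - k)))
            * (c₁ * c₂)
            * (r ^ ((j : ℤ) + l + q₁) * r ^ (((m - j : ℕ) : ℤ) + ((p - l : ℕ) : ℤ) + q₂))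
            * (ρ ^ k * ρ ^ (n - k))
            * (1 / (((j : ℝ) + 1) ^ 2 * ((m : ℝ) - (j : ℝ) + 1) ^ 2)
              * (1 / (((k : ℝ) + 1) ^ 2 * ((n : ℝ) - (k : ℝ) + 1) ^ 2))
              * (1 / (((l : ℝ) + 1) ^ 2 * ((p : ℝ) - (l : ℝ) + 1) ^ 2)))) := by
        rw [e1, e2, e3]; simp only [div_eq_mul_inv, mul_inv, one_div]; ring
    _ ≤ (Nat.factorial (m + p) : ℝ)
        * (((n.choose k : ℝ) * (Nat.factorial k) * (Nat.factorial (n - k)))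
            * (c₁ * c₂)
            * (r ^ ((j : ℤ) + l + q₁) * r ^ (((m - j : ℕ) : ℤ) + ((p - l : ℕ) : ℤ) + q₂))
            * (ρ ^ k * ρ ^ (n - k))
            * (1 / (((j : ℝ) + 1) ^ 2 * ((m : ℝ) - (j : ℝ) + 1) ^ 2)
              * (1 / (((k : ℝ) + 1) ^ 2 * ((n : ℝ) - (k : ℝ) + 1) ^ 2))
              * (1 / (((l : ℝ) + 1) ^ 2 * ((p : ℝ) - (l : ℝ) + 1) ^ 2)))) := by
        apply mul_le_mul_of_nonneg_right (key_fact m p j l hj hl)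
        have h1 : (0:ℝ) ≤ (n.choose k : ℝ) * (Nat.factorial k) * (Nat.factorial (n - k)) := by
          positivity
        have h2 : (0:ℝ) < r ^ ((j : ℤ) + l + q₁)
            * r ^ (((m - j : ℕ) : ℤ) + ((p - l : ℕ) : ℤ) + q₂) := by positivity
        positivity
    _ = c₁ * c₂ * r ^ ((m : ℤ) + p + q₁ + q₂) * (Nat.factorial (m + p) : ℝ) * ρ ^ n
        * (Nat.factorial n : ℝ) *
      (1 / (((j : ℝ) + 1) ^ 2 * ((m : ℝ) - (j : ℝ) + 1) ^ 2)
        * (1 / (((k : ℝ) + 1) ^ 2 * ((n : ℝ) - (k : ℝ) + 1) ^ 2))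
        * (1 / (((l : ℝ) + 1) ^ 2 * ((p : ℝ) - (l : ℝ) + 1) ^ 2))) := by
        rw [hzr, hpn, hnf]; ring

lemma triple_factor (M N P : Finset ℕ) (F G H : ℕ → ℝ) (c : ℝ) :
    ∑ j ∈ M, ∑ k ∈ N, ∑ l ∈ P, c * (F j * G k * H l)
      = c * ((∑ j ∈ M, F j) * (∑ k ∈ N, G k) * (∑ l ∈ P, H l)) := by
  have h1 : ∀ j k, ∑ l ∈ P, c * (F j * G k * H l) = (∑ l ∈ P, H l) * (c * (F j * G k)) := by
    intro j k; rw [Finset.sum_mul]; exact Finset.sum_congr rfl fun l _ => by ring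
  have h2 : ∀ j, ∑ k ∈ N, (∑ l ∈ P, H l) * (c * (F j * G k))
      = (∑ k ∈ N, G k) * ((∑ l ∈ P, H l) * (c * F j)) := by
    intro j; rw [Finset.sum_mul]; exact Finset.sum_congr rfl fun k _ => by ring
  have h3 : ∑ j ∈ M, (∑ k ∈ N, G k) * ((∑ l ∈ P, H l) * (c * F j))
      = (∑ j ∈ M, F j) * ((∑ k ∈ N, G k) * ((∑ l ∈ P, H l) * c)) := by
    rw [Finset.sum_mul]; exact Finset.sum_congr rfl fun j _ => by ring
  calc ∑ j ∈ M, ∑ k ∈ N, ∑ l ∈ P, c * (F j * G k * H l)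
      = ∑ j ∈ M, ∑ k ∈ N, (∑ l ∈ P, H l) * (c * (F j * G k)) :=
        Finset.sum_congr rfl fun j _ => Finset.sum_congr rfl fun k _ => h1 j k
    _ = ∑ j ∈ M, (∑ k ∈ N, G k) * ((∑ l ∈ P, H l) * (c * F j)) :=
        Finset.sum_congr rfl fun j _ => h2 j
    _ = (∑ j ∈ M, F j) * ((∑ k ∈ N, G k) * ((∑ l ∈ P, H l) * c)) := h3
    _ = c * ((∑ j ∈ M, F j) * (∑ k ∈ N, G k) * (∑ l ∈ P, H l)) := by ring

set_option maxHeartbeats 1600000 in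
theorem stmt_7 (m n p : ℕ) (r ρ c₁ c₂ Cc : ℝ) (q₁ q₂ : ℤ)
    (hr : 0 < r) (hρ : 0 < ρ) (hc₁ : 0 < c₁) (hc₂ : 0 < c₂)
    (hCc : ∀ N : ℕ, ∑ k ∈ Finset.range (N + 1),
        (1 : ℝ) / (((k : ℝ) + 1) ^ 2 * ((N : ℝ) - (k : ℝ) + 1) ^ 2) ≤ Cc / ((N : ℝ) + 1) ^ 2)
    (a b : ℕ → ℕ → ℕ → ℂ)
    (ha : ∀ j k l : ℕ, j ≤ m → k ≤ n → l ≤ p →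
      ‖a j k l‖ ≤ c₁ * r ^ ((j : ℤ) + l + q₁) * (Nat.factorial (j + l) : ℝ) * ρ ^ k
        * (Nat.factorial k : ℝ)
        / (((j : ℝ) + 1) ^ 2 * ((k : ℝ) + 1) ^ 2 * ((l : ℝ) + 1) ^ 2))
    (hb : ∀ j k l : ℕ, j ≤ m → k ≤ n → l ≤ p →
      ‖b j k l‖ ≤ c₂ * r ^ ((j : ℤ) + l + q₂) * (Nat.factorial (j + l) : ℝ) * ρ ^ k
        * (Nat.factorial k : ℝ)
        / (((j : ℝ) + 1) ^ 2 * ((k : ℝ) + 1) ^ 2 * ((l : ℝ) + 1) ^ 2)) :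
    ‖∑ j ∈ Finset.range (m + 1), ∑ k ∈ Finset.range (n + 1), ∑ l ∈ Finset.range (p + 1),
        (m.choose j : ℂ) * (n.choose k : ℂ) * (p.choose l : ℂ)
          * a j k l * b (m - j) (n - k) (p - l)‖
      ≤ Cc ^ 3 * c₁ * c₂ * r ^ ((m : ℤ) + p + q₁ + q₂) * (Nat.factorial (m + p) : ℝ)
          * ρ ^ n * (Nat.factorial n : ℝ)
          / (((m : ℝ) + 1) ^ 2 * ((n : ℝ) + 1) ^ 2 * ((p : ℝ) + 1) ^ 2) := by
  set T : ℝ := c₁ * c₂ * r ^ ((m : ℤ) + p + q₁ + q₂) * (Nat.factorial (m + p) : ℝ) * ρ ^ n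
      * (Nat.factorial n : ℝ) with hT
  set f : ℕ → ℝ := fun j => 1 / (((j : ℝ) + 1) ^ 2 * ((m : ℝ) - (j : ℝ) + 1) ^ 2) with hf
  set g : ℕ → ℝ := fun k => 1 / (((k : ℝ) + 1) ^ 2 * ((n : ℝ) - (k : ℝ) + 1) ^ 2) with hg
  set h : ℕ → ℝ := fun l => 1 / (((l : ℝ) + 1) ^ 2 * ((p : ℝ) - (l : ℝ) + 1) ^ 2) with hh
  have hT0 : 0 ≤ T := by positivity
  have key : ∀ j ∈ Finset.range (m + 1), ∀ k ∈ Finset.range (n + 1),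
      ∀ l ∈ Finset.range (p + 1),
      ‖(m.choose j : ℂ) * (n.choose k : ℂ) * (p.choose l : ℂ)
          * a j k l * b (m - j) (n - k) (p - l)‖ ≤ T * (f j * g k * h l) := by
    intro j hjr k hkr l hlr
    rw [Finset.mem_range] at hjr hkr hlr
    have hj : j ≤ m := by omega
    have hk : k ≤ n := by omega
    have hl : l ≤ p := by omega
    have hnorm : ‖(m.choose j : ℂ) * (n.choose k : ℂ) * (p.choose l : ℂ)
          * a j k l * b (m - j) (n - k) (p - l)‖
        = (m.choose j : ℝ) * (n.choose k : ℝ) * (p.choose l : ℝ)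
          * ‖a j k l‖ * ‖b (m - j) (n - k) (p - l)‖ := by
      simp [norm_mul]
    rw [hnorm]
    calc (m.choose j : ℝ) * (n.choose k : ℝ) * (p.choose l : ℝ)
          * ‖a j k l‖ * ‖b (m - j) (n - k) (p - l)‖
        ≤ (m.choose j : ℝ) * (n.choose k : ℝ) * (p.choose l : ℝ)
          * (c₁ * r ^ ((j : ℤ) + l + q₁) * (Nat.factorial (j + l) : ℝ) * ρ ^ k
            * (Nat.factorial k : ℝ)
            / (((j : ℝ) + 1) ^ 2 * ((k : ℝ) + 1) ^ 2 * ((l : ℝ) + 1) ^ 2))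
          * (c₂ * r ^ (((m - j : ℕ) : ℤ) + ((p - l : ℕ) : ℤ) + q₂)
            * (Nat.factorial ((m - j) + (p - l)) : ℝ) * ρ ^ (n - k)
            * (Nat.factorial (n - k) : ℝ)
            / ((((m - j : ℕ) : ℝ) + 1) ^ 2 * (((n - k : ℕ) : ℝ) + 1) ^ 2
                * (((p - l : ℕ) : ℝ) + 1) ^ 2)) := by
          gcongr
          · exact ha j k l hj hk hl
          · exact hb (m - j) (n - k) (p - l) (by omega) (by omega) (by omega)
      _ ≤ T * (f j * g k * h l) := by
          rw [hT, hf, hg, hh]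
          exact term_bound m n p j k l r ρ c₁ c₂ q₁ q₂ hr hρ hc₁.le hc₂.le hj hk hl
  have hf0 : ∀ j ∈ Finset.range (m + 1), 0 ≤ f j := by
    intro j _; rw [hf]; positivity
  have hg0 : ∀ k ∈ Finset.range (n + 1), 0 ≤ g k := by
    intro k _; rw [hg]; positivity
  have hh0 : ∀ l ∈ Finset.range (p + 1), 0 ≤ h l := by
    intro l _; rw [hh]; positivity
  calc ‖∑ j ∈ Finset.range (m + 1), ∑ k ∈ Finset.range (n + 1), ∑ l ∈ Finset.range (p + 1),
        (m.choose j : ℂ) * (n.choose k : ℂ) * (p.choose l : ℂ)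
          * a j k l * b (m - j) (n - k) (p - l)‖
      ≤ ∑ j ∈ Finset.range (m + 1), ∑ k ∈ Finset.range (n + 1), ∑ l ∈ Finset.range (p + 1),
          T * (f j * g k * h l) := by
        refine (norm_sum_le _ _).trans (Finset.sum_le_sum fun j hj => ?_)
        refine (norm_sum_le _ _).trans (Finset.sum_le_sum fun k hk => ?_)
        refine (norm_sum_le _ _).trans (Finset.sum_le_sum fun l hl => ?_)
        exact key j hj k hk l hl
    _ = T * ((∑ j ∈ Finset.range (m + 1), f j) * (∑ k ∈ Finset.range (n + 1), g k)
          * (∑ l ∈ Finset.range (p + 1), h l)) := by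
        exact triple_factor _ _ _ f g h T
    _ ≤ T * ((Cc / ((m : ℝ) + 1) ^ 2) * (Cc / ((n : ℝ) + 1) ^ 2) * (Cc / ((p : ℝ) + 1) ^ 2)) := by
        have h1 := hCc m
        have h2 := hCc n
        have h3 := hCc p
        have hCc1 : (1:ℝ) ≤ Cc := by
          have := hCc 0
          simpa using this
        gcongr
    _ = Cc ^ 3 * c₁ * c₂ * r ^ ((m : ℤ) + p + q₁ + q₂) * (Nat.factorial (m + p) : ℝ)
          * ρ ^ n * (Nat.factorial n : ℝ)
          / (((m : ℝ) + 1) ^ 2 * ((n : ℝ) + 1) ^ 2 * ((p : ℝ) + 1) ^ 2) := by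
        rw [hT]; simp only [div_eq_mul_inv, mul_inv]; ring
end

section
/- Suppose a family of coefficients a_{m,n,p} (m, n, p non-negative integers) satisfies |a_{m,n,p}| <= c * r^{m+p} * (m+p)! * ρ^n * n! / ((m+1)^2 (n+1)^2 (p+1)^2) for all m, n, p, and a_{m,n,p} = 0 whenever n > 2m + k for a fixed integer k >= 0. Then for any real α with 0 < α <= 1, the triple power series ∑ a_{m,n,p} u^m v^n w^p / (m! n! p!) converges absolutely for |v| < 1/(α ρ) and |u| + |w| < α^2 / r. -/
set_option maxHeartbeats 1000000 in

theorem stmt_12 (c r ρ : ℝ) (k : ℕ) (hc : 0 < c) (hr : 0 < r) (hρ : 0 < ρ)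
    (a : ℕ → ℕ → ℕ → ℂ)
    (ha : ∀ m n p : ℕ,
      ‖a m n p‖ ≤ c * r ^ (m + p) * (Nat.factorial (m + p) : ℝ) * ρ ^ n
        * (Nat.factorial n : ℝ)
        / (((m : ℝ) + 1) ^ 2 * ((n : ℝ) + 1) ^ 2 * ((p : ℝ) + 1) ^ 2))
    (hvan : ∀ m n p : ℕ, 2 * m + k < n → a m n p = 0) :
    ∀ α : ℝ, 0 < α → α ≤ 1 → ∀ u v w : ℂ,
      ‖v‖ < 1 / (α * ρ) → ‖u‖ + ‖w‖ < α ^ 2 / r →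
      Summable (fun q : ℕ × ℕ × ℕ =>
        ‖a q.1 q.2.1 q.2.2 * u ^ q.1 * v ^ q.2.1 * w ^ q.2.2
          / ((Nat.factorial q.1 : ℂ) * (Nat.factorial q.2.1 : ℂ)
              * (Nat.factorial q.2.2 : ℂ))‖) := by
  intro α hα hα1 u v w hv huw
  have hαne : α ≠ 0 := ne_of_gt hα
  have hα2 : (0:ℝ) < α ^ 2 := by positivity
  obtain ⟨x, hxdef⟩ : ∃ t : ℝ, t = r * ‖u‖ / α ^ 2 := ⟨_, rfl⟩
  obtain ⟨z, hzdef⟩ : ∃ t : ℝ, t = r * ‖w‖ / α ^ 2 := ⟨_, rfl⟩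
  obtain ⟨y, hydef⟩ : ∃ t : ℝ, t = α * (ρ * ‖v‖) := ⟨_, rfl⟩
  have hx0 : 0 ≤ x := by rw [hxdef]; positivity
  have hz0 : 0 ≤ z := by rw [hzdef]; positivity
  have hy0 : 0 ≤ y := by rw [hydef]; positivity
  have hxz : x + z < 1 := by
    have h1 : r * (‖u‖ + ‖w‖) < α ^ 2 := by
      have := (mul_lt_mul_iff_right₀ hr).2 huw
      rwa [mul_div_cancel₀ _ (ne_of_gt hr)] at this
    rw [hxdef, hzdef, ← add_div, div_lt_one hα2]
    nlinarith
  have hx1 : x < 1 := by linarith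
  have hy1 : y < 1 := by
    have hαρ : 0 < α * ρ := by positivity
    have := (mul_lt_mul_iff_right₀ hαρ).2 hv
    rw [mul_one_div, div_self (ne_of_gt hαρ)] at this
    rw [hydef, ← mul_assoc]
    exact this
  -- the majorant
  obtain ⟨F, hFdef⟩ : ∃ F : ℕ × ℕ × ℕ → ℝ, F = fun q =>
      (c / α ^ k) * ((q.1 + q.2.2).choose q.2.2 : ℝ) * x ^ q.1 * y ^ q.2.1 * z ^ q.2.2 :=
    ⟨_, rfl⟩
  have hcα : 0 ≤ c / α ^ k := by positivity
  have hF0 : ∀ q, 0 ≤ F q := by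
    rw [hFdef]
    rintro ⟨m, n, p⟩
    dsimp only
    exact mul_nonneg (mul_nonneg (mul_nonneg (mul_nonneg hcα (Nat.cast_nonneg _))
      (pow_nonneg hx0 _)) (pow_nonneg hy0 _)) (pow_nonneg hz0 _)
  have hxnorm : ‖x‖ < 1 := by rwa [Real.norm_eq_abs, abs_of_nonneg hx0]
  have h1x : 0 < 1 - x := by linarith
  have hG : Summable (fun pm : ℕ × ℕ =>
      ((pm.2 + pm.1).choose pm.1 : ℝ) * x ^ pm.2 * z ^ pm.1) := by
    rw [summable_prod_of_nonneg (by
      rintro ⟨p, m⟩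
      exact mul_nonneg (mul_nonneg (Nat.cast_nonneg _) (pow_nonneg hx0 _))
        (pow_nonneg hz0 _))]
    constructor
    · intro p
      exact ((summable_choose_mul_geometric_of_norm_lt_one (R := ℝ) p hxnorm).mul_right
        (z ^ p)).congr (fun m => by ring)
    · have hbase : z / (1 - x) < 1 := by
        rw [div_lt_one h1x]; linarith
      have hbase0 : 0 ≤ z / (1 - x) := by positivity
      have hgeo : Summable (fun p : ℕ => (1 / (1 - x)) * (z / (1 - x)) ^ p) :=
        (summable_geometric_of_lt_one hbase0 hbase).mul_left _
      apply hgeo.congr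
      intro p
      have ht : ∑' m : ℕ, ((m + p).choose p : ℝ) * x ^ m * z ^ p
          = (∑' m : ℕ, ((m + p).choose p : ℝ) * x ^ m) * z ^ p := tsum_mul_right
      rw [ht, tsum_choose_mul_geometric_of_norm_lt_one p hxnorm, div_pow, pow_succ,
        one_div, one_div, mul_inv]
      ring
  have hH : Summable (fun n : ℕ => y ^ n) := summable_geometric_of_lt_one hy0 hy1
  have hNG : Summable (fun q : ℕ × (ℕ × ℕ) =>
      (fun n : ℕ => y ^ n) q.1 *
        (fun pm : ℕ × ℕ => ((pm.2 + pm.1).choose pm.1 : ℝ) * x ^ pm.2 * z ^ pm.1) q.2) :=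
    Summable.mul_of_nonneg hH hG (fun n => pow_nonneg hy0 _)
      (fun pm => mul_nonneg (mul_nonneg (Nat.cast_nonneg _) (pow_nonneg hx0 _))
        (pow_nonneg hz0 _))
  have hcomp : Summable (fun q : ℕ × ℕ × ℕ =>
      y ^ q.2.1 * (((q.1 + q.2.2).choose q.2.2 : ℝ) * x ^ q.1 * z ^ q.2.2)) := by
    let e : (ℕ × ℕ × ℕ) ≃ (ℕ × (ℕ × ℕ)) :=
      { toFun := fun q => (q.2.1, (q.2.2, q.1))
        invFun := fun q => (q.2.2, q.1, q.2.1)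
        left_inv := fun ⟨m, n, p⟩ => rfl
        right_inv := fun ⟨n, p, m⟩ => rfl }
    have h := (Equiv.summable_iff e).mpr hNG
    exact h.congr (fun ⟨m, n, p⟩ => rfl)
  have hFsum : Summable F := by
    have h := hcomp.mul_left (c / α ^ k)
    apply h.congr
    rintro ⟨m, n, p⟩
    rw [hFdef]
    dsimp only
    ring
  -- the pointwise bound
  apply Summable.of_nonneg_of_le (fun q => norm_nonneg _) _ hFsum
  rintro ⟨m, n, p⟩
  by_cases hcase : 2 * m + k < n
  · rw [hvan m n p hcase]
    simpa using hF0 (m, n, p)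
  · push_neg at hcase
    have hmfac : (0:ℝ) < (m.factorial : ℝ) := by exact_mod_cast m.factorial_pos
    have hnfac : (0:ℝ) < (n.factorial : ℝ) := by exact_mod_cast n.factorial_pos
    have hpfac : (0:ℝ) < (p.factorial : ℝ) := by exact_mod_cast p.factorial_pos
    have hnorm : ‖a m n p * u ^ m * v ^ n * w ^ p
        / ((m.factorial : ℂ) * (n.factorial : ℂ) * (p.factorial : ℂ))‖
        = ‖a m n p‖ * ‖u‖ ^ m * ‖v‖ ^ n * ‖w‖ ^ p
          / ((m.factorial : ℝ) * (n.factorial : ℝ) * (p.factorial : ℝ)) := by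
      simp [norm_div, norm_mul, norm_pow]
    rw [hnorm]
    obtain ⟨B, hBdef⟩ : ∃ t : ℝ,
        t = c * ((m + p).choose p : ℝ) * (r * ‖u‖) ^ m * (ρ * ‖v‖) ^ n * (r * ‖w‖) ^ p :=
      ⟨_, rfl⟩
    have hB0 : 0 ≤ B := by
      rw [hBdef]
      have : (0:ℝ) ≤ ((m + p).choose p : ℝ) := Nat.cast_nonneg _
      positivity
    have hfac : ((m + p).factorial : ℝ)
        = ((m + p).choose p : ℝ) * (p.factorial : ℝ) * (m.factorial : ℝ) := by
      have h2 := Nat.choose_mul_factorial_mul_factorial (Nat.le_add_left p m)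
      rw [Nat.add_sub_cancel] at h2
      exact_mod_cast h2.symm
    have hstepA : ‖a m n p‖ * ‖u‖ ^ m * ‖v‖ ^ n * ‖w‖ ^ p
        / ((m.factorial : ℝ) * (n.factorial : ℝ) * (p.factorial : ℝ)) ≤ B := by
      have hD : (1:ℝ) ≤ ((m : ℝ) + 1) ^ 2 * ((n : ℝ) + 1) ^ 2 * ((p : ℝ) + 1) ^ 2 := by
        have h1 : (1:ℝ) ≤ ((m : ℝ) + 1) ^ 2 := by
          have : (0:ℝ) ≤ (m : ℝ) := Nat.cast_nonneg _; nlinarith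
        have h2 : (1:ℝ) ≤ ((n : ℝ) + 1) ^ 2 := by
          have : (0:ℝ) ≤ (n : ℝ) := Nat.cast_nonneg _; nlinarith
        have h3 : (1:ℝ) ≤ ((p : ℝ) + 1) ^ 2 := by
          have : (0:ℝ) ≤ (p : ℝ) := Nat.cast_nonneg _; nlinarith
        calc (1:ℝ) = 1 * 1 * 1 := by ring
          _ ≤ _ := by gcongr
      have ha' : ‖a m n p‖ ≤ c * r ^ (m + p) * ((m + p).factorial : ℝ) * ρ ^ n
          * (n.factorial : ℝ) := by
        refine (ha m n p).trans ?_
        have hnum : 0 ≤ c * r ^ (m + p) * ((m + p).factorial : ℝ) * ρ ^ n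
            * (n.factorial : ℝ) := by positivity
        calc c * r ^ (m + p) * ((m + p).factorial : ℝ) * ρ ^ n * (n.factorial : ℝ)
              / (((m : ℝ) + 1) ^ 2 * ((n : ℝ) + 1) ^ 2 * ((p : ℝ) + 1) ^ 2)
            ≤ c * r ^ (m + p) * ((m + p).factorial : ℝ) * ρ ^ n * (n.factorial : ℝ) / 1 := by
              gcongr
          _ = _ := by rw [div_one]
      have hprod : 0 ≤ ‖u‖ ^ m * ‖v‖ ^ n * ‖w‖ ^ p := by positivity
      have hfacpos : (0:ℝ) < (m.factorial : ℝ) * (n.factorial : ℝ) * (p.factorial : ℝ) := by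
        positivity
      rw [div_le_iff₀ hfacpos]
      calc ‖a m n p‖ * ‖u‖ ^ m * ‖v‖ ^ n * ‖w‖ ^ p
          ≤ (c * r ^ (m + p) * ((m + p).factorial : ℝ) * ρ ^ n * (n.factorial : ℝ))
            * ‖u‖ ^ m * ‖v‖ ^ n * ‖w‖ ^ p := by
            have h := mul_le_mul_of_nonneg_right ha' hprod
            calc ‖a m n p‖ * ‖u‖ ^ m * ‖v‖ ^ n * ‖w‖ ^ p
                = ‖a m n p‖ * (‖u‖ ^ m * ‖v‖ ^ n * ‖w‖ ^ p) := by ring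
              _ ≤ (c * r ^ (m + p) * ((m + p).factorial : ℝ) * ρ ^ n * (n.factorial : ℝ))
                  * (‖u‖ ^ m * ‖v‖ ^ n * ‖w‖ ^ p) := h
              _ = _ := by ring
        _ = B * ((m.factorial : ℝ) * (n.factorial : ℝ) * (p.factorial : ℝ)) := by
            rw [hBdef, hfac, pow_add, mul_pow, mul_pow, mul_pow]
            ring
    -- step B: B ≤ F
    have hstepB : B ≤ F (m, n, p) := by
      have hαk : (0:ℝ) < α ^ (k + 2 * m + 2 * p) := by positivity
      have hpow : α ^ (k + 2 * m + 2 * p) ≤ α ^ n :=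
        pow_le_pow_of_le_one hα.le hα1 (by omega)
      have hFB : F (m, n, p) * α ^ (k + 2 * m + 2 * p) = B * α ^ n := by
        rw [hFdef, hBdef]
        dsimp only
        rw [hxdef, hzdef, hydef]
        field_simp
        rw [div_pow, div_pow, ← pow_mul, ← pow_mul, pow_add, pow_add]
        field_simp
        ring
      have h2 : B * α ^ (k + 2 * m + 2 * p) ≤ F (m, n, p) * α ^ (k + 2 * m + 2 * p) := by
        rw [hFB]
        exact mul_le_mul_of_nonneg_left hpow hB0
      exact le_of_mul_le_mul_right h2 hαk
    exact hstepA.trans hstepB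
end

section
/- Suppose coefficients ψ_{m,j} satisfy |ψ_{m,j}| <= C(2m+4, j) M r_1^{-m} for all m >= 0, 0 <= j <= 2m+4, and define transformed coefficients ψ^t_{m,n} = ∑_{j=0}^{2m+4} sqrt(C(2m+4,n)/C(2m+4,j)) T^j_n ψ_{m,j} where the complex numbers T^j_n satisfy |T^j_n| <= 1. Then |ψ^t_{m,n}| <= C(2m+4, n) * (16 M) * (r_1/4)^{-m} for all m >= 0, 0 <= n <= 2m+4. -/
/-!
Each term of the transformed sum is bounded by dropping the phase `T` and using
`√C(N,n) / √C(N,j) ≤ C(N,n)` (all binomial coefficients in range are `≥ 1`). What remains is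
`C(N,n) M r₁⁻ᵐ ∑ⱼ C(N,j) = C(N,n) M r₁⁻ᵐ 2^N` with `N = 2m + 4`, and `2^(2m+4) = 16 · 4^m`.
-/

open Finset

lemma norm_sum_mul_mul_le {ι R : Type*} [SeminormedRing R] (s : Finset ι) (a t x : ι → R)
    (A : ℝ) (B : ι → ℝ) (ha : ∀ j ∈ s, ‖a j‖ ≤ A) (ht : ∀ j ∈ s, ‖t j‖ ≤ 1)
    (hx : ∀ j ∈ s, ‖x j‖ ≤ B j) :
    ‖∑ j ∈ s, a j * t j * x j‖ ≤ A * ∑ j ∈ s, B j := by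
  rw [mul_sum]
  refine (norm_sum_le _ _).trans (sum_le_sum fun j hj => ?_)
  have hA : 0 ≤ A := (norm_nonneg _).trans (ha j hj)
  calc ‖a j * t j * x j‖ ≤ ‖a j‖ * ‖t j‖ * ‖x j‖ := norm_mul₃_le
    _ ≤ A * 1 * B j := by
      gcongr
      exacts [ha j hj, ht j hj, hx j hj]
    _ = A * B j := by rw [mul_one]

lemma sqrt_div_sqrt_le_self {a b : ℝ} (ha : 1 ≤ a) (hb : 1 ≤ b) : √a / √b ≤ a :=
  calc √a / √b ≤ √a := div_le_self (Real.sqrt_nonneg a) (Real.one_le_sqrt.mpr hb)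
    _ ≤ a := Real.sqrt_le_self_iff.mpr (Or.inr ha)

lemma one_le_choose_cast {N k : ℕ} (hk : k ≤ N) : (1 : ℝ) ≤ N.choose k :=
  Nat.one_le_cast.mpr (Nat.choose_pos hk)

lemma norm_sqrt_choose_div_sqrt_choose_le {N n j : ℕ} (hn : n ≤ N) (hj : j ≤ N) :
    ‖((√(N.choose n) / √(N.choose j) : ℝ) : ℂ)‖ ≤ N.choose n := by
  rw [Complex.norm_real, Real.norm_of_nonneg (by positivity)]
  exact sqrt_div_sqrt_le_self (one_le_choose_cast hn) (one_le_choose_cast hj)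

lemma two_pow_div_pow_eq (r : ℝ) (m : ℕ) : 2 ^ (2 * m + 4) / r ^ m = 16 / (r / 4) ^ m := by
  rw [div_pow, div_div_eq_mul_div, pow_add, pow_mul]
  norm_num
  ring

theorem stmt_18_general (M r₁ : ℝ)
    (ψ : ℕ → ℕ → ℂ) (T : ℕ → ℕ → ℕ → ℂ)
    (hψ : ∀ m j : ℕ, j ≤ 2 * m + 4 →
      ‖ψ m j‖ ≤ ((2 * m + 4).choose j : ℝ) * M / r₁ ^ m)
    (hT : ∀ m j n : ℕ, ‖T m j n‖ ≤ 1) :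
    ∀ m n : ℕ, n ≤ 2 * m + 4 →
      ‖∑ j ∈ Finset.range (2 * m + 5),
          ((Real.sqrt ((2 * m + 4).choose n) / Real.sqrt ((2 * m + 4).choose j) : ℝ) : ℂ)
            * T m j n * ψ m j‖
        ≤ ((2 * m + 4).choose n : ℝ) * (16 * M) / (r₁ / 4) ^ m := by
  intro m n hn
  have hrange : ∀ j ∈ range (2 * m + 5), j ≤ 2 * m + 4 := fun j hj =>
    Nat.lt_succ_iff.mp (mem_range.mp hj)
  have hsum : ∑ j ∈ range (2 * m + 5), ((2 * m + 4).choose j : ℝ) = 2 ^ (2 * m + 4) := by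
    exact_mod_cast Nat.sum_range_choose (2 * m + 4)
  calc _ ≤ ((2 * m + 4).choose n : ℝ) *
        ∑ j ∈ range (2 * m + 5), ((2 * m + 4).choose j : ℝ) * M / r₁ ^ m :=
        norm_sum_mul_mul_le _ _ _ _ _ _
          (fun j hj => norm_sqrt_choose_div_sqrt_choose_le hn (hrange j hj))
          (fun j _ => hT m j n) (fun j hj => hψ m j (hrange j hj))
    _ = ((2 * m + 4).choose n : ℝ) * M * (2 ^ (2 * m + 4) / r₁ ^ m) := by
        rw [← sum_div, ← sum_mul, hsum]
        ring
    _ = _ := by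
        rw [two_pow_div_pow_eq]
        ring

theorem stmt_18 (M r₁ : ℝ) (hM : 0 < M) (hr₁ : 0 < r₁)
    (ψ : ℕ → ℕ → ℂ) (T : ℕ → ℕ → ℕ → ℂ)
    (hψ : ∀ m j : ℕ, j ≤ 2 * m + 4 →
      ‖ψ m j‖ ≤ ((2 * m + 4).choose j : ℝ) * M / r₁ ^ m)
    (hT : ∀ m j n : ℕ, ‖T m j n‖ ≤ 1) :
    ∀ m n : ℕ, n ≤ 2 * m + 4 →
      ‖∑ j ∈ Finset.range (2 * m + 5),
          ((Real.sqrt ((2 * m + 4).choose n) / Real.sqrt ((2 * m + 4).choose j) : ℝ) : ℂ)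
            * T m j n * ψ m j‖
        ≤ ((2 * m + 4).choose n : ℝ) * (16 * M) / (r₁ / 4) ^ m :=
  stmt_18_general M r₁ ψ T hψ hT
end
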